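/- arXiv:1910.11666 — 7 statements merged into one kernel-verified Lean document; each statement's English description precedes it below -/
import Mathlib

section
/- Let Z be a set, let X be a subset of the power set of Z, and let a ∈ X and b ⊆ Z with a ⊄ b (i.e., a is not a subset of b). Suppose every nonempty subfamily S of X has a minimal element with respect to inclusion. Then there exists x ∈ X that is join-irreducible in X, with x ⊆ a and x ⊄ b. -/
/-- `x` is join-irreducible in the family `X`: it is nonempty and belongs to every
subfamily of `X` whose union it is. -/
def JoinIrred {Z : Type*} (X : Set (Set Z)) (x : Set Z) : Prop :=
  x.Nonempty ∧ ∀ F : Set (Set Z), F ⊆ X → x = ⋃₀ F → x ∈ F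

/-! A minimal member `x` of `X` with `x ⊄ b` is join-irreducible: if `x = ⋃₀ F`, a point of
`x \ b` lies in some `f ∈ F`, and then `f ⊆ x`, `f ⊄ b` force `f = x` by minimality. Below any
`a ∈ X` with `a ⊄ b` such a minimal member exists, because every nonempty subfamily of `X`
has a minimal element. -/

theorem joinIrred_of_minimal_not_subset {Z : Type*} {X : Set (Set Z)} {b x : Set Z}
    (hx : Minimal (fun y => y ∈ X ∧ ¬ y ⊆ b) x) : JoinIrred X x := by
  obtain ⟨z, hzx, hzb⟩ := Set.not_subset.mp hx.prop.2
  refine ⟨⟨z, hzx⟩, fun F hFX hxF => ?_⟩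
  obtain ⟨f, hfF, hzf⟩ := Set.mem_sUnion.mp (hxF ▸ hzx)
  have hfx : f ⊆ x := hxF ▸ Set.subset_sUnion_of_mem hfF
  have hf : f ∈ X ∧ ¬ f ⊆ b := ⟨hFX hfF, fun hfb => hzb (hfb hzf)⟩
  rwa [← hfx.antisymm (hx.2 hf hfx)]

theorem exists_minimal_subset_of_mem {Z : Type*} {X : Set (Set Z)} {P : Set Z → Prop}
    (hmin : ∀ S : Set (Set Z), S ⊆ X → S.Nonempty → ∃ m ∈ S, ∀ s ∈ S, s ⊆ m → s = m)
    {a : Set Z} (ha : a ∈ X) (hPa : P a) :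
    ∃ m ⊆ a, Minimal (fun y => y ∈ X ∧ P y) m := by
  obtain ⟨m, ⟨hm, hma⟩, hmin⟩ :=
    hmin {y | (y ∈ X ∧ P y) ∧ y ⊆ a} (fun y hy => hy.1.1) ⟨a, ⟨ha, hPa⟩, subset_rfl⟩
  exact ⟨m, hma, hm, fun y hy hym => (hmin y ⟨hy, hym.trans hma⟩ hym).ge⟩

/-- if every nonempty subfamily of `X` has an inclusion-minimal element,
`a ∈ X` and `a ⊄ b`, then there is a join-irreducible `x ∈ X` with `x ⊆ a` and `x ⊄ b`. -/
theorem stmt4 {Z : Type*} (X : Set (Set Z)) (a b : Set Z)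
    (hmin : ∀ S : Set (Set Z), S ⊆ X → S.Nonempty →
      ∃ m ∈ S, ∀ s ∈ S, s ⊆ m → s = m)
    (ha : a ∈ X) (hab : ¬ a ⊆ b) :
    ∃ x ∈ X, JoinIrred X x ∧ x ⊆ a ∧ ¬ x ⊆ b := by
  obtain ⟨x, hxa, hx⟩ := exists_minimal_subset_of_mem (P := fun y => ¬ y ⊆ b) hmin ha hab
  exact ⟨x, hx.prop.1, joinIrred_of_minimal_not_subset hx, hxa, hx.prop.2⟩
end

section
/- Let Z be a set and X a family of subsets of Z such that every nonempty subfamily of X has an inclusion-minimal element. Then every a ∈ X equals the union of the join-irreducible elements of X below it: a = ⋃{ x ∈ X | x is join-irreducible in X and x ⊆ a }. -/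
theorem joinIrred_of_minimal_mem {Z : Type*} {X : Set (Set Z)} {m : Set Z} {z : Z}
    (hzm : z ∈ m) (hmin : ∀ x ∈ X, z ∈ x → x ⊆ m → x = m) : JoinIrred X m := by
  refine ⟨⟨z, hzm⟩, fun F hFX hmF => ?_⟩
  obtain ⟨f, hfF, hzf⟩ : z ∈ ⋃₀ F := hmF ▸ hzm
  have hfm : f ⊆ m := hmF ▸ Set.subset_sUnion_of_mem hfF
  exact hmin f (hFX hfF) hzf hfm ▸ hfF

theorem exists_joinIrred_mem_subset {Z : Type*} {X : Set (Set Z)}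
    (hmin : ∀ S : Set (Set Z), S ⊆ X → S.Nonempty → ∃ m ∈ S, ∀ s ∈ S, s ⊆ m → s = m)
    {a : Set Z} (ha : a ∈ X) {z : Z} (hz : z ∈ a) :
    ∃ x ∈ X, JoinIrred X x ∧ x ⊆ a ∧ z ∈ x := by
  obtain ⟨m, ⟨hmX, hzm, hma⟩, hm⟩ :=
    hmin {x | x ∈ X ∧ z ∈ x ∧ x ⊆ a} (fun x hx => hx.1) ⟨a, ha, hz, subset_rfl⟩
  refine ⟨m, hmX, joinIrred_of_minimal_mem hzm fun x hxX hzx hxm => ?_, hma, hzm⟩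
  exact hm x ⟨hxX, hzx, hxm.trans hma⟩ hxm

/-- if every nonempty subfamily of `X` has an inclusion-minimal element,
then every `a ∈ X` is the union of the join-irreducibles of `X` below it. -/
theorem stmt5 {Z : Type*} (X : Set (Set Z))
    (hmin : ∀ S : Set (Set Z), S ⊆ X → S.Nonempty →
      ∃ m ∈ S, ∀ s ∈ S, s ⊆ m → s = m) :
    ∀ a ∈ X, a = ⋃₀ {x | x ∈ X ∧ JoinIrred X x ∧ x ⊆ a} := by
  intro a ha
  refine Set.Subset.antisymm (fun z hz => ?_) (Set.sUnion_subset fun x hx => hx.2.2)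
  obtain ⟨x, hxX, hx, hxa, hzx⟩ := exists_joinIrred_mem_subset hmin ha hz
  exact ⟨x, ⟨hxX, hx, hxa⟩, hzx⟩
end

section
/- Let Z be a set, Y ⊆ X ⊆ 𝒫(Z) families of subsets of Z, and suppose every element of X is a union of join-irreducible elements of Y (i.e., X is contained in the closure of JI(Y) under arbitrary unions). Then the join-irreducible elements of Y coincide with the join-irreducible elements of X: JI(Y) = JI(X). -/
open Set

namespace JoinIrred

variable {Z : Type*} {X Y : Set (Set Z)} {y : Set Z}

theorem of_forall_eq_sUnion (h : JoinIrred Y y) (hX : ∀ a ∈ X, ∃ F ⊆ Y, a = ⋃₀ F) :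
    JoinIrred X y := by
  refine ⟨h.1, fun F hFX hyF => ?_⟩
  set G := {s ∈ Y | ∃ a ∈ F, s ⊆ a}
  have hyG : y = ⋃₀ G := by
    refine subset_antisymm ?_ (sUnion_subset ?_)
    · rw [hyF]
      rintro z ⟨a, haF, hza⟩
      obtain ⟨Fa, hFaY, rfl⟩ := hX a (hFX haF)
      obtain ⟨s, hs, hzs⟩ := hza
      exact ⟨s, ⟨hFaY hs, _, haF, subset_sUnion_of_mem hs⟩, hzs⟩
    · rintro s ⟨-, a, haF, hsa⟩
      exact hyF ▸ hsa.trans (subset_sUnion_of_mem haF)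
  obtain ⟨-, a, haF, hya⟩ := h.2 G (sep_subset _ _) hyG
  have hay : a ⊆ y := hyF ▸ subset_sUnion_of_mem haF
  exact hay.antisymm hya ▸ haF

end JoinIrred

/-- if `Y ⊆ X` and every element of `X` is a union of join-irreducibles of `Y`,
then the join-irreducibles of `Y` and of `X` coincide. -/
theorem stmt6 {Z : Type*} (Y X : Set (Set Z)) (hYX : Y ⊆ X)
    (hgen : ∀ a ∈ X, ∃ F : Set (Set Z),
      F ⊆ {y | y ∈ Y ∧ JoinIrred Y y} ∧ a = ⋃₀ F) :
    {y | y ∈ Y ∧ JoinIrred Y y} = {x | x ∈ X ∧ JoinIrred X x} := by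
  ext y
  constructor
  · rintro ⟨hyY, hy⟩
    refine ⟨hYX hyY, hy.of_forall_eq_sUnion fun a ha => ?_⟩
    obtain ⟨F, hF, rfl⟩ := hgen a ha
    exact ⟨F, fun s hs => (hF hs).1, rfl⟩
  · rintro ⟨hyX, hy⟩
    obtain ⟨F, hF, hyF⟩ := hgen y hyX
    exact hF (hy.2 F (fun s hs => hYX (hF hs).1) hyF)
end

section
/- Let A = (Σ, Q, I, F, δ) be a nondeterministic automaton (possibly with infinite state set) such that every state q accepts a derivative of L(A), i.e., for each q there is a word w with L(q) = w⁻¹L(A). If I = ∅, then L(A) = ∅; if I ≠ ∅, every state is final, and δ(q,a) ≠ ∅ for all q ∈ Q and a ∈ Σ, then L(A) = Σ*. -/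
/-- A nondeterministic automaton with alphabet `σ` and state set `Q`. -/
structure NA (σ Q : Type*) where
  I : Set Q
  F : Set Q
  δ : Q → σ → Set Q

/-- Acceptance of a word from a state. -/
def NA.Acc {σ Q : Type*} (A : NA σ Q) : List σ → Q → Prop
  | [], q => q ∈ A.F
  | a :: w, q => ∃ q' ∈ A.δ q a, A.Acc w q'

/-- The language accepted from a state. -/
def NA.stateLang {σ Q : Type*} (A : NA σ Q) (q : Q) : Set (List σ) :=
  {w | A.Acc w q}

/-- The language accepted by the automaton. -/
def NA.lang {σ Q : Type*} (A : NA σ Q) : Set (List σ) :=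
  {w | ∃ q ∈ A.I, A.Acc w q}

/-- The derivative of a language with respect to a word: `u⁻¹L = {w | uw ∈ L}`. -/
def lderiv {σ : Type*} (L : Set (List σ)) (u : List σ) : Set (List σ) :=
  {w | u ++ w ∈ L}

theorem NA.lang_eq_empty_of_I_eq_empty {σ Q : Type*} (A : NA σ Q) (hI : A.I = ∅) :
    A.lang = ∅ := by
  simp [NA.lang, hI]

theorem NA.acc_of_forall_mem_F_of_forall_δ_nonempty {σ Q : Type*} (A : NA σ Q)
    (hF : ∀ q, q ∈ A.F) (hδ : ∀ q a, (A.δ q a).Nonempty) : ∀ (w : List σ) (q : Q), A.Acc w q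
  | [], q => hF q
  | a :: w, q =>
    let ⟨q', hq'⟩ := hδ q a
    ⟨q', hq', A.acc_of_forall_mem_F_of_forall_δ_nonempty hF hδ w q'⟩

theorem NA.lang_eq_univ_of_forall_mem_F_of_forall_δ_nonempty {σ Q : Type*} (A : NA σ Q)
    (hI : A.I.Nonempty) (hF : ∀ q, q ∈ A.F) (hδ : ∀ q a, (A.δ q a).Nonempty) :
    A.lang = Set.univ :=
  let ⟨q₀, hq₀⟩ := hI
  Set.eq_univ_of_forall fun w =>
    ⟨q₀, hq₀, A.acc_of_forall_mem_F_of_forall_δ_nonempty hF hδ w q₀⟩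

theorem stmt9_general {σ Q : Type*} (A : NA σ Q) :
    (A.I = ∅ → A.lang = ∅) ∧
    ((A.I.Nonempty ∧ (∀ q : Q, q ∈ A.F) ∧ ∀ (q : Q) (a : σ), (A.δ q a).Nonempty) →
      A.lang = Set.univ) :=
  ⟨A.lang_eq_empty_of_I_eq_empty, fun ⟨hI, hF, hδ⟩ =>
    A.lang_eq_univ_of_forall_mem_F_of_forall_δ_nonempty hI hF hδ⟩

/-- for a residual automaton (every state language is a derivative of the
accepted language): if `I = ∅` then `L(A) = ∅`; and if `I ≠ ∅`, every state is final, and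
every state has an `a`-successor for every letter `a`, then `L(A) = Σ*`. -/
theorem stmt9 {σ Q : Type*} (A : NA σ Q)
    (hres : ∀ q : Q, ∃ w : List σ, A.stateLang q = lderiv A.lang w) :
    (A.I = ∅ → A.lang = ∅) ∧
    ((A.I.Nonempty ∧ (∀ q : Q, q ∈ A.F) ∧ ∀ (q : Q) (a : σ), (A.δ q a).Nonempty) →
      A.lang = Set.univ) :=
  stmt9_general A
end

section
/- Let L ⊆ Σ* and suppose J := JI(Res(L)), the set of join-irreducible derivatives of L, generates Res(L) under unions. Define an automaton with states Q = J, initial states I = { x ∈ Q | x ⊆ L }, final states F = { x ∈ Q | ε ∈ x }, and transitions δ(x, a) = { y ∈ Q | y ⊆ a⁻¹x } for x = w⁻¹L (i.e., y ∈ δ(w⁻¹L, a) iff y ⊆ (wa)⁻¹L). Then every state x ∈ Q accepts exactly the language x, and the automaton accepts L. -/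
/-- The set of derivatives of `L`. -/
def Res {σ : Type*} (L : Set (List σ)) : Set (Set (List σ)) :=
  {D | ∃ w : List σ, D = lderiv L w}

/-- The join-irreducible derivatives of `L`. -/
def JIRes {σ : Type*} (L : Set (List σ)) : Set (Set (List σ)) :=
  {x | x ∈ Res L ∧ JoinIrred (Res L) x}

/-- The canonical residual automaton of `L`: states are (join-irreducible) derivatives. -/
def canonRes {σ : Type*} (L : Set (List σ)) : NA σ (Set (List σ)) where
  I := {x | x ∈ JIRes L ∧ x ⊆ L}
  F := {x | x ∈ JIRes L ∧ [] ∈ x}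
  δ := fun x a => {y | y ∈ JIRes L ∧ y ⊆ lderiv x [a]}

/- Each state `x = u⁻¹L` has as successors under `a` exactly the join-irreducible derivatives
below `(ua)⁻¹L`, and these cover it because `J` generates `Res L`; so by induction on the
word, `x` accepts `w` iff `w ∈ x`. The initial states likewise cover `L = ε⁻¹L`. -/

theorem lderiv_lderiv {σ : Type*} (L : Set (List σ)) (u v : List σ) :
    lderiv (lderiv L u) v = lderiv L (u ++ v) := by
  ext w
  simp only [lderiv, Set.mem_ofPred_eq, List.append_assoc]

theorem self_mem_Res {σ : Type*} (L : Set (List σ)) : L ∈ Res L := ⟨[], rfl⟩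

theorem lderiv_mem_Res {σ : Type*} {L x : Set (List σ)} (hx : x ∈ Res L) (v : List σ) :
    lderiv x v ∈ Res L := by
  obtain ⟨u, rfl⟩ := hx
  exact ⟨u ++ v, lderiv_lderiv L u v⟩

theorem sUnion_JIRes_subset_eq {σ : Type*} {L : Set (List σ)}
    (hgen : ∀ D ∈ Res L, ∃ F : Set (Set (List σ)), F ⊆ JIRes L ∧ D = ⋃₀ F)
    {D : Set (List σ)} (hD : D ∈ Res L) :
    ⋃₀ {y | y ∈ JIRes L ∧ y ⊆ D} = D := by
  obtain ⟨F, hFJ, rfl⟩ := hgen D hD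
  refine subset_antisymm (Set.sUnion_subset fun y hy => hy.2) (Set.sUnion_mono ?_)
  exact fun y hy => ⟨hFJ hy, Set.subset_sUnion_of_mem hy⟩

theorem canonRes_acc_iff {σ : Type*} {L : Set (List σ)}
    (hgen : ∀ D ∈ Res L, ∃ F : Set (Set (List σ)), F ⊆ JIRes L ∧ D = ⋃₀ F)
    (w : List σ) {x : Set (List σ)} (hx : x ∈ JIRes L) :
    (canonRes L).Acc w x ↔ w ∈ x := by
  induction w generalizing x with
  | nil => exact and_iff_right hx
  | cons a w ih =>
    have hcover := sUnion_JIRes_subset_eq hgen (lderiv_mem_Res hx.1 [a])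
    calc (canonRes L).Acc (a :: w) x
        ↔ ∃ y ∈ (canonRes L).δ x a, w ∈ y :=
          exists_congr fun y => and_congr_right fun hy => ih hy.1
      _ ↔ w ∈ lderiv x [a] := Set.mem_sUnion.symm.trans (Set.ext_iff.mp hcover w)
      _ ↔ a :: w ∈ x := Iff.rfl

/-- if the join-irreducible derivatives generate all derivatives of `L`
under unions, then in the canonical residual automaton every state `x` accepts exactly
the language `x`, and the automaton accepts `L`. -/
theorem stmt12 {σ : Type*} (L : Set (List σ))
    (hgen : ∀ D ∈ Res L, ∃ F : Set (Set (List σ)), F ⊆ JIRes L ∧ D = ⋃₀ F) :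
    (∀ x ∈ JIRes L, (canonRes L).stateLang x = x) ∧ (canonRes L).lang = L := by
  refine ⟨fun x hx => Set.ext fun w => canonRes_acc_iff hgen w hx, ?_⟩
  ext w
  calc w ∈ (canonRes L).lang ↔ ∃ x ∈ (canonRes L).I, w ∈ x :=
        exists_congr fun x => and_congr_right fun hx => canonRes_acc_iff hgen w hx.1
    _ ↔ w ∈ L :=
        Set.mem_sUnion.symm.trans (Set.ext_iff.mp (sUnion_JIRes_subset_eq hgen (self_mem_Res L)) w)
end

section
/- Consider the language L_n = { wa ∈ 𝔸* | a ∈ 𝔸 does not occur in w } ∪ {ε} over an infinite alphabet 𝔸. Then for every letter a, the derivative a⁻¹L_n equals the union ⋃_{b ≠ a} (ab)⁻¹L_n, and hence a⁻¹L_n is not join-irreducible in Res(L_n). -/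
/-- The language "the last letter is unique": `{wa | a does not occur in w} ∪ {ε}`. -/
def Ln (𝔸 : Type*) : Set (List 𝔸) :=
  {x | ∃ (w : List 𝔸) (a : 𝔸), x = w ++ [a] ∧ a ∉ w} ∪ {[]}

/-!
Membership of a nonempty word `v ++ [c]` in `u⁻¹Lₙ` only asks that `c` avoid the letters of
`u ++ v`. So a word of `a⁻¹Lₙ` also lies in `(ab)⁻¹Lₙ` for any letter `b` fresh for it and `a`,
which exists because the alphabet is infinite; conversely `(ab)⁻¹Lₙ ⊆ a⁻¹Lₙ`. The union is not
join-irreducible because the one-letter word `b` lies in `a⁻¹Lₙ` but not in `(ab)⁻¹Lₙ`.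
-/

namespace Ln

variable {𝔸 : Type*}

lemma append_singleton_mem_iff {w : List 𝔸} {c : 𝔸} : w ++ [c] ∈ Ln 𝔸 ↔ c ∉ w := by
  constructor
  · rintro (⟨v, d, h, hd⟩ | h)
    · obtain ⟨rfl, hcd⟩ := List.append_inj' h rfl
      simpa [List.singleton_inj.mp hcd] using hd
    · simp at h
  · exact fun h => Or.inl ⟨w, c, rfl, h⟩

lemma append_mem_iff {u v : List 𝔸} {c : 𝔸} : u ++ (v ++ [c]) ∈ Ln 𝔸 ↔ c ∉ u ++ v := by
  rw [← List.append_assoc, append_singleton_mem_iff]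

lemma singleton_mem (a : 𝔸) : [a] ∈ Ln 𝔸 :=
  append_singleton_mem_iff.mpr List.not_mem_nil

lemma pair_mem_iff {a b : 𝔸} : [a, b] ∈ Ln 𝔸 ↔ b ≠ a := by
  simpa using append_singleton_mem_iff (w := [a]) (c := b)

lemma lderiv_pair_subset (a b : 𝔸) : lderiv (Ln 𝔸) [a, b] ⊆ lderiv (Ln 𝔸) [a] := by
  intro w hw
  rcases w.eq_nil_or_concat' with rfl | ⟨v, c, rfl⟩
  · exact singleton_mem a
  · have hc : c ∉ [a, b] ++ v := append_mem_iff.mp hw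
    exact append_mem_iff.mpr fun h => hc (by simp_all)

lemma exists_mem_lderiv_pair [Infinite 𝔸] {a : 𝔸} {w : List 𝔸} (hw : w ∈ lderiv (Ln 𝔸) [a]) :
    ∃ b, b ≠ a ∧ w ∈ lderiv (Ln 𝔸) [a, b] := by
  classical
  obtain ⟨b, hb⟩ := Infinite.exists_notMem_finset (a :: w).toFinset
  simp only [List.mem_toFinset, List.mem_cons, not_or] at hb
  refine ⟨b, hb.1, ?_⟩
  rcases w.eq_nil_or_concat' with rfl | ⟨v, c, rfl⟩
  · exact pair_mem_iff.mpr hb.1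
  · have hc : c ∉ [a] ++ v := append_mem_iff.mp hw
    have hcb : c ≠ b := fun h => hb.2 (by simp [h])
    exact append_mem_iff.mpr fun h => by simp_all

lemma lderiv_singleton_eq_sUnion [Infinite 𝔸] (a : 𝔸) :
    lderiv (Ln 𝔸) [a] = ⋃₀ {D | ∃ b : 𝔸, b ≠ a ∧ D = lderiv (Ln 𝔸) [a, b]} := by
  apply Set.Subset.antisymm
  · intro w hw
    obtain ⟨b, hb, hwb⟩ := exists_mem_lderiv_pair hw
    exact ⟨_, ⟨b, hb, rfl⟩, hwb⟩
  · rintro w ⟨_, ⟨b, -, rfl⟩, hw⟩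
    exact lderiv_pair_subset a b hw

lemma singleton_notMem_lderiv_pair (a b : 𝔸) : [b] ∉ lderiv (Ln 𝔸) [a, b] := fun h =>
  append_singleton_mem_iff.mp h (by simp)

end Ln

/-- over an infinite alphabet, `a⁻¹Lₙ = ⋃_{b ≠ a} (ab)⁻¹Lₙ`, and hence
`a⁻¹Lₙ` is not join-irreducible in `Res Lₙ`. -/
theorem stmt13 {𝔸 : Type*} [Infinite 𝔸] (a : 𝔸) :
    lderiv (Ln 𝔸) [a] = ⋃₀ {D | ∃ b : 𝔸, b ≠ a ∧ D = lderiv (Ln 𝔸) [a, b]} ∧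
      ¬ JoinIrred (Res (Ln 𝔸)) (lderiv (Ln 𝔸) [a]) := by
  refine ⟨Ln.lderiv_singleton_eq_sUnion a, fun ⟨_, hirred⟩ => ?_⟩
  have hsub : {D | ∃ b : 𝔸, b ≠ a ∧ D = lderiv (Ln 𝔸) [a, b]} ⊆ Res (Ln 𝔸) := by
    rintro _ ⟨b, -, rfl⟩
    exact ⟨[a, b], rfl⟩
  obtain ⟨b, hb, heq⟩ := hirred _ hsub (Ln.lderiv_singleton_eq_sUnion a)
  exact Ln.singleton_notMem_lderiv_pair a b (heq ▸ Ln.pair_mem_iff.mpr hb)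
end

section
/- Let T = (S, E) be an observation table for a target language L ⊆ Σ*, with row function row(s) = { e ∈ E | se ∈ L }, and suppose the constructed hypothesis automaton A(T) has states Q = join-irreducible rows among { row(s) | s ∈ S }, final states F = { r ∈ Q | ε ∈ r }, and transitions δ(row(s), a) = { r' ∈ Q | r' ⊆ row(sa) }. If E contains ε and is suffix-closed, and T is join-closed (every row(sa) is the union of the join-irreducible rows below it), then for every s ∈ S whose row is a state, the language accepted from state row(s), intersected with E, equals row(s): L(row(s)) ∩ E = row(s). -/
/-- The row of `s` in the observation table `(S, E)` for the target language `L`. -/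
def row {σ : Type*} (L : Set (List σ)) (E : Set (List σ)) (s : List σ) : Set (List σ) :=
  {e | e ∈ E ∧ s ++ e ∈ L}

/-- The set of rows of the table. -/
def Rows {σ : Type*} (L S E : Set (List σ)) : Set (Set (List σ)) :=
  {r | ∃ s ∈ S, r = row L E s}

/-- The states of the hypothesis automaton: join-irreducible rows. -/
def QRows {σ : Type*} (L S E : Set (List σ)) : Set (Set (List σ)) :=
  {r | r ∈ Rows L S E ∧ JoinIrred (Rows L S E) r}

/-- The hypothesis automaton constructed from the observation table `(S, E)`:
states are the join-irreducible rows, a row is final iff it contains `ε`, and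
`δ(row s, a) = { r' ∈ Q | r' ⊆ row (s a) }`. -/
def hypAut {σ : Type*} (L S E : Set (List σ)) : NA σ (Set (List σ)) where
  I := ∅
  F := {r | r ∈ QRows L S E ∧ [] ∈ r}
  δ := fun r a => {r' | r' ∈ QRows L S E ∧ ∃ s ∈ S, row L E s = r ∧ r' ⊆ row L E (s ++ [a])}

/-!
Induction on the word `w`. Reading `a` from `row s` leads exactly to the join-irreducible rows
below `row (s a)`, and `a w ∈ row s ↔ w ∈ row (s a)` as soon as both words lie in `E`, which
suffix-closure guarantees. Soundness (accepted words of `E` lie in the row) needs nothing more;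
completeness uses join-closure to find, for `w ∈ row (s a)`, a state below `row (s a)`
containing `w`.
-/

theorem mem_row_append_singleton_iff {σ : Type*} {L E : Set (List σ)} {s w : List σ} {a : σ}
    (hw : w ∈ E) (haw : a :: w ∈ E) :
    w ∈ row L E (s ++ [a]) ↔ a :: w ∈ row L E s := by
  simp [row, hw, haw]

section hypAut

variable {σ : Type*} {L S E : Set (List σ)}

theorem mem_of_hypAut_acc (hEsuf : ∀ e ∈ E, ∀ u : List σ, u <:+ e → u ∈ E) :
    ∀ (w : List σ) (r : Set (List σ)), w ∈ E → (hypAut L S E).Acc w r → w ∈ r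
  | [], _, _, hacc => hacc.2
  | a :: w, _, haw, ⟨r', ⟨_, s, _, hrow, hsub⟩, hacc⟩ => by
    have hw : w ∈ E := hEsuf _ haw w (List.suffix_cons a w)
    rw [← hrow, ← mem_row_append_singleton_iff hw haw]
    exact hsub (mem_of_hypAut_acc hEsuf w r' hw hacc)

theorem hypAut_acc_of_mem (hEsuf : ∀ e ∈ E, ∀ u : List σ, u <:+ e → u ∈ E)
    (hclosed : ∀ s ∈ S, ∀ a : σ,
      row L E (s ++ [a]) = ⋃₀ {r | r ∈ QRows L S E ∧ r ⊆ row L E (s ++ [a])}) :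
    ∀ (w : List σ) (r : Set (List σ)), r ∈ QRows L S E → w ∈ r → (hypAut L S E).Acc w r
  | [], _, hQ, hr => ⟨hQ, hr⟩
  | a :: w, _, hQ, haw => by
    obtain ⟨s, hs, rfl⟩ := hQ.1
    have hw : w ∈ row L E (s ++ [a]) :=
      (mem_row_append_singleton_iff (hEsuf _ haw.1 w (List.suffix_cons a w)) haw.1).2 haw
    rw [hclosed s hs a] at hw
    obtain ⟨r', ⟨hr'Q, hsub⟩, hwr'⟩ := hw
    exact ⟨r', ⟨hr'Q, s, hs, rfl, hsub⟩, hypAut_acc_of_mem hEsuf hclosed w r' hr'Q hwr'⟩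

end hypAut

theorem stmt19_general {σ : Type*} (L S E : Set (List σ))
    (hEsuf : ∀ e ∈ E, ∀ u : List σ, u <:+ e → u ∈ E)
    (hclosed : ∀ s ∈ S, ∀ a : σ,
      row L E (s ++ [a]) = ⋃₀ {r | r ∈ QRows L S E ∧ r ⊆ row L E (s ++ [a])}) :
    ∀ s ∈ S, row L E s ∈ QRows L S E →
      (hypAut L S E).stateLang (row L E s) ∩ E = row L E s := by
  intro s _ hQ
  ext w
  constructor
  · rintro ⟨hacc, hw⟩
    exact mem_of_hypAut_acc hEsuf w _ hw hacc
  · intro hw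
    exact ⟨hypAut_acc_of_mem hEsuf hclosed w _ hQ hw, hw.1⟩

/-- if `ε ∈ E`, `E` is suffix-closed, and the table is join-closed (every
`row (s a)` is the union of the join-irreducible rows below it), then for every `s ∈ S`
whose row is a state of the hypothesis automaton, the language accepted from that state,
intersected with `E`, equals `row s`. -/
theorem stmt19 {σ : Type*} (L S E : Set (List σ))
    (hE0 : [] ∈ E)
    (hEsuf : ∀ e ∈ E, ∀ u : List σ, u <:+ e → u ∈ E)
    (hclosed : ∀ s ∈ S, ∀ a : σ,
      row L E (s ++ [a]) = ⋃₀ {r | r ∈ QRows L S E ∧ r ⊆ row L E (s ++ [a])}) :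
    ∀ s ∈ S, row L E s ∈ QRows L S E →
      (hypAut L S E).stateLang (row L E s) ∩ E = row L E s :=
  stmt19_general L S E hEsuf hclosed
end
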